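/- (Gating Lemma) Let d_embed ≥ 5 and H = [h_t]_{1≤t≤ℓ} ∈ ℝ^{d_embed×ℓ} be an embedding matrix with rows d_embed−2, d_embed−1 equal to the positional encodings 𝓘_t and last row all ones. Then for any 1 ≤ r₁ ≤ r₂ ≤ d_embed−3 and any 1 ≤ k₁, k₂ ≤ ℓ, there exist two-layer feed-forward ReLU networks FFN₁ and FFN₂ with ‖θ_FFN‖_∞ ≤ O(ℓ ‖H‖_{∞,∞}) such that: FFN₁(h_t) = h_t for t ∈ {1,…,k₁} and FFN₁(h_t) zeroes out coordinates r₁ through r₂ of h_t (leaving all other coordinates, the positional encoding, and the constant 1 unchanged) otherwise; and FFN₂(h_t) = h_t for t ∈ {k₂,…,ℓ} and zeroes out coordinates r₁ through r₂ otherwise. -/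

import Mathlib

open scoped BigOperators
open Metric Set MeasureTheory
open scoped Matrix

namespace Paper

noncomputable section

/-- ReLU activation. -/
def relu (x : ℝ) : ℝ := max x 0

/-- Euclidean space `ℝ^D` with the `ℓ²` norm. -/
abbrev Euc (D : ℕ) := EuclideanSpace ℝ (Fin D)

/-- Maximum absolute entry of a matrix (`‖H‖_{∞,∞}`). -/
def matSup {m n : ℕ} (H : Matrix (Fin m) (Fin n) ℝ) : ℝ := ⨆ i, ⨆ j, |H i j|

/-- Sup norm `‖x‖_∞` of a vector. -/
def supNorm {D : ℕ} (x : Fin D → ℝ) : ℝ := ⨆ i, |x i|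

/-- An attention head: query, key and value matrices. -/
structure Head (de : ℕ) where
  Q : Matrix (Fin de) (Fin de) ℝ
  K : Matrix (Fin de) (Fin de) ℝ
  V : Matrix (Fin de) (Fin de) ℝ

/-- Action of an attention head on an embedding matrix:
`A(H) = V H σ((K H)ᵀ Q H)` with `σ = ReLU`. -/
def Head.eval {de : ℕ} (A : Head de) {ℓ : ℕ} (H : Matrix (Fin de) (Fin ℓ) ℝ) :
    Matrix (Fin de) (Fin ℓ) ℝ :=
  A.V * H * ((A.K * H)ᵀ * (A.Q * H)).map relu

/-- Tokenwise action of an attention head: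
`A(h_t) = Σ_j σ(⟨Q h_t, K h_j⟩) V h_j`. -/
def Head.tokenEval {de ℓ : ℕ} (A : Head de) (H : Matrix (Fin de) (Fin ℓ) ℝ)
    (t : Fin ℓ) : Fin de → ℝ := fun i =>
  ∑ j : Fin ℓ,
    relu (∑ k, A.Q.mulVec (fun r => H r t) k * A.K.mulVec (fun r => H r j) k) *
      A.V.mulVec (fun r => H r j) i

/-- Maximum weight magnitude of an attention head. -/
def Head.wnorm {de : ℕ} (A : Head de) : ℝ := matSup A.Q ⊔ matSup A.K ⊔ matSup A.V

/-- A fully-connected (tokenwise) ReLU feed-forward network of depth `L`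
and hidden width `w` on embedding dimension `de`. -/
structure FFN (de w L : ℕ) where
  Win : Matrix (Fin w) (Fin de) ℝ
  bin : Fin w → ℝ
  Wmid : Fin L → Matrix (Fin w) (Fin w) ℝ
  bmid : Fin L → Fin w → ℝ
  Wout : Matrix (Fin de) (Fin w) ℝ
  bout : Fin de → ℝ

/-- Evaluation of a feed-forward ReLU network on one token. -/
def FFN.eval {de w L : ℕ} (f : FFN de w L) (x : Fin de → ℝ) : Fin de → ℝ :=
  let h0 : Fin w → ℝ := fun i => relu (∑ j, f.Win i j * x j + f.bin i)
  let hL : Fin w → ℝ := (List.finRange L).foldl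
    (fun h k => fun i => relu (∑ j, f.Wmid k i j * h j + f.bmid k i)) h0
  fun i => ∑ j, f.Wout i j * hL j + f.bout i

/-- Maximum weight magnitude of a feed-forward network. -/
def FFN.wnorm {de w L : ℕ} (f : FFN de w L) : ℝ :=
  matSup f.Win ⊔ (⨆ i, |f.bin i|) ⊔ (⨆ k, matSup (f.Wmid k)) ⊔
    (⨆ k, ⨆ i, |f.bmid k i|) ⊔ matSup f.Wout ⊔ (⨆ i, |f.bout i|)

/-- A two-layer feed-forward ReLU network. -/
structure TwoLayerFFN (de w : ℕ) where
  W1 : Matrix (Fin w) (Fin de) ℝ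
  b1 : Fin w → ℝ
  W2 : Matrix (Fin de) (Fin w) ℝ
  b2 : Fin de → ℝ

def TwoLayerFFN.eval {de w : ℕ} (f : TwoLayerFFN de w) (x : Fin de → ℝ) :
    Fin de → ℝ := fun i =>
  ∑ j, f.W2 i j * relu (∑ k, f.W1 j k * x k + f.b1 j) + f.b2 i

def TwoLayerFFN.wnorm {de w : ℕ} (f : TwoLayerFFN de w) : ℝ :=
  matSup f.W1 ⊔ (⨆ i, |f.b1 i|) ⊔ matSup f.W2 ⊔ (⨆ i, |f.b2 i|)

/-- A transformer block `B(H) = FFN(MHA(H)+H) + MHA(H) + H` with `m` attention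
heads and a tokenwise feed-forward network of depth `L` and width `w`;
this formalizes the class `𝓑(m, L, de)`. -/
structure Block (de m w L : ℕ) where
  heads : Fin m → Head de
  ffn : FFN de w L

def Block.eval {de m w L : ℕ} (B : Block de m w L) {ℓ : ℕ}
    (H : Matrix (Fin de) (Fin ℓ) ℝ) : Matrix (Fin de) (Fin ℓ) ℝ :=
  let H1 := (∑ j, (B.heads j).eval H) + H
  Matrix.of (fun i t => B.ffn.eval (fun r => H1 r t) i) + H1

def Block.wnorm {de m w L : ℕ} (B : Block de m w L) : ℝ :=
  (⨆ j, (B.heads j).wnorm) ⊔ B.ffn.wnorm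

/-- A transformer network: linear embedding, positional encoding, `LT` transformer
blocks (each with `mT` heads and FFNs of depth `LF`, width `wF`), and a decoding
layer returning the first entry of the last column. -/
structure TransformerNet (D LT mT de ℓ LF wF : ℕ) where
  emb : Fin de → Fin ℓ → Fin D → ℝ
  PE : Matrix (Fin de) (Fin ℓ) ℝ
  blocks : Fin LT → Block de mT wF LF

def TransformerNet.eval {D LT mT de ℓ LF wF : ℕ}
    (T : TransformerNet D LT mT de ℓ LF wF) (x : Fin D → ℝ) : ℝ :=
  let H0 : Matrix (Fin de) (Fin ℓ) ℝ :=
    T.PE + Matrix.of fun i t => ∑ j, T.emb i t j * x j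
  let HL := (List.finRange LT).foldl (fun H k => (T.blocks k).eval H) H0
  if h : 0 < de ∧ 0 < ℓ then HL ⟨0, h.1⟩ ⟨ℓ - 1, Nat.sub_lt h.2 Nat.one_pos⟩ else 0

/-- Maximum weight magnitude `‖θ‖_∞` of a transformer network. -/
def TransformerNet.wnorm {D LT mT de ℓ LF wF : ℕ}
    (T : TransformerNet D LT mT de ℓ LF wF) : ℝ :=
  (⨆ i, ⨆ t, ⨆ j, |T.emb i t j|) ⊔ matSup T.PE ⊔ (⨆ k, (T.blocks k).wnorm)

/-- Membership in the transformer class `𝒯(L_T, m_T, d_embed, ℓ, L_FFN, w_FFN, R, κ)`: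
sup-norm output bound `R` and weight magnitudes at most `κ`. -/
def TransformerNet.inClass {D LT mT de ℓ LF wF : ℕ}
    (T : TransformerNet D LT mT de ℓ LF wF) (R κ : ℝ) : Prop :=
  (∀ x : Fin D → ℝ, |T.eval x| ≤ R) ∧ T.wnorm ≤ κ

/-- Medial axis of a set. -/
def medialAxis {D : ℕ} (S : Set (Euc D)) : Set (Euc D) :=
  {x | ∃ p ∈ S, ∃ q ∈ S, p ≠ q ∧
    dist p x = infDist x S ∧ dist q x = infDist x S}

/-- Local reach `τ_M(v)`. -/
def localReach {D : ℕ} (S : Set (Euc D)) (v : Euc D) : ℝ :=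
  infDist v (medialAxis S)

/-- Reach `τ_M` of a set. -/
def reach {D : ℕ} (S : Set (Euc D)) : ℝ := ⨅ v ∈ S, localReach S v

/-- Geodesic distance on `S`: infimum of lengths of `C¹` curves in `S`. -/
def geoDist {D : ℕ} (S : Set (Euc D)) (v v' : Euc D) : ℝ :=
  sInf {l : ℝ | ∃ γ : ℝ → Euc D, (∀ t ∈ Icc (0:ℝ) 1, γ t ∈ S) ∧
    ContDiffOn ℝ 1 γ (Icc 0 1) ∧ γ 0 = v ∧ γ 1 = v' ∧
    l = ∫ t in (0:ℝ)..1, ‖deriv γ t‖}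

/-- Orthogonal projection onto `S` (a choice of nearest point, when one exists). -/
def projOn {D : ℕ} (S : Set (Euc D)) (x : Euc D) : Euc D :=
  Classical.epsilon fun y => y ∈ S ∧ dist x y = infDist x S

/-- A nonempty, compact, connected `d`-dimensional manifold `M ⊆ [0,1]^D`,
together with a choice of orthonormal tangent frames `P(v)`. -/
structure GoodManifold (D d : ℕ) where
  carrier : Set (Euc D)
  nonempty : carrier.Nonempty
  compact : IsCompact carrier
  connected : IsConnected carrier
  subset_cube : ∀ x ∈ carrier, ∀ i, x i ∈ Icc (0:ℝ) 1
  locallyEuclidean : ∀ v ∈ carrier, ∃ U : Set (Euc D), IsOpen U ∧ v ∈ U ∧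
    ∃ V : Set (EuclideanSpace ℝ (Fin d)), IsOpen V ∧
      Nonempty (↥(carrier ∩ U) ≃ₜ ↥V)
  frame : Euc D → Matrix (Fin D) (Fin d) ℝ
  frame_orthonormal : ∀ v ∈ carrier, (frame v)ᵀ * frame v = 1

/-- The tubular region `M(q)` around the manifold. -/
def GoodManifold.tube {D d : ℕ} (M : GoodManifold D d) (q : ℝ) : Set (Euc D) :=
  {x | ∃ v ∈ M.carrier, ∃ u : Euc D, x = v + u ∧
    (M.frame v)ᵀ.mulVec (fun i => u i) = 0 ∧
    ‖u‖ < q * localReach M.carrier v}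

/-- The volume `Vol(M)`: the `d`-dimensional Hausdorff measure of the carrier. -/
def vol {D d : ℕ} (M : GoodManifold D d) : ℝ :=
  (MeasureTheory.Measure.hausdorffMeasure (d : ℝ) M.carrier).toReal

/-- A maximal `δ`-separated net `{z₁,…,z_K}` of `M` w.r.t. geodesic distance. -/
structure SepNet {D d : ℕ} (M : GoodManifold D d) (δ : ℝ) (K : ℕ) where
  z : Fin K → Euc D
  mem : ∀ i, z i ∈ M.carrier
  sep : ∀ i j, i ≠ j → δ < geoDist M.carrier (z i) (z j)
  maximal : ∀ y ∈ M.carrier, ∃ i, geoDist M.carrier y (z i) ≤ δ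

/-- The bump functions `η̃_i` built from the net, with `p = (1+q)/2` and
`h = 6/(1 - q p⁻¹)`. -/
def etaTilde {D d K : ℕ} (M : GoodManifold D d) (q δ : ℝ) (N : SepNet M δ K)
    (i : Fin K) (x : Euc D) : ℝ :=
  relu (1 - (dist x (N.z i) / (((1 + q) / 2) * localReach M.carrier (N.z i))) ^ 2
    - (Real.sqrt (∑ j, (∑ r, M.frame (N.z i) r j * (x r - N.z i r)) ^ 2)
        / ((6 / (1 - q / ((1 + q) / 2))) * δ)) ^ 2)

/-- The normalized partition of unity `η_i = η̃_i / ‖η̃‖₁`. -/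
def etaFun {D d K : ℕ} (M : GoodManifold D d) (q δ : ℝ) (N : SepNet M δ K)
    (i : Fin K) (x : Euc D) : ℝ :=
  etaTilde M q δ N i x / ∑ j, etaTilde M q δ N j x

/-- Embedding matrix predicate for `d_embed = 5`: second row zero, rows 3–4 the
sinusoidal positional encodings, fifth row all ones. -/
def IsEmbed5 {ℓ : ℕ} (H : Matrix (Fin 5) (Fin ℓ) ℝ) : Prop :=
  (∀ t, H 1 t = 0) ∧
  (∀ t : Fin ℓ, H 2 t = Real.cos ((((t : ℕ) : ℝ) + 1) * Real.pi / (2 * ℓ))) ∧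
  (∀ t : Fin ℓ, H 3 t = Real.sin ((((t : ℕ) : ℝ) + 1) * Real.pi / (2 * ℓ))) ∧
  (∀ t, H 4 t = 1)

/-- Embedding matrix predicate for general `d_embed = e + 5 ≥ 5`: rows
`d_embed−2, d_embed−1` are the positional encodings and the last row is all ones. -/
def IsEmbedG (e ℓ : ℕ) (H : Matrix (Fin (e + 5)) (Fin ℓ) ℝ) : Prop :=
  (∀ t : Fin ℓ, H ⟨e + 2, by omega⟩ t
      = Real.cos ((((t : ℕ) : ℝ) + 1) * Real.pi / (2 * ℓ))) ∧
  (∀ t : Fin ℓ, H ⟨e + 3, by omega⟩ t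
      = Real.sin ((((t : ℕ) : ℝ) + 1) * Real.pi / (2 * ℓ))) ∧
  (∀ t, H ⟨e + 4, by omega⟩ t = 1)

/-!
The two positional-encoding rows give the scalar `phase ℓ s = cos (sπ/2ℓ) - sin (sπ/2ℓ)` of
token `s` by one linear readout. It decreases in `s` with steps of at least `1/ℓ`, because
`cos x - sin x` falls at rate at least `2/π` on `[0, π/2]`. Putting the threshold `c` halfway
between two consecutive phases, the score `u = 4ℓB (phase - c)` (or its negative), with
`B = ‖H‖_{∞,∞}`, is `≥ 2B` on one side of the cut and `≤ 0` on the other. A gated coordinate is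
output as `σ(x_i + u - B) - σ(u - B)`, which is `x_i` when `u ≥ 2B` and `0` when `u ≤ 0` since
`|x_i| ≤ B`; the other coordinates pass through as `σ(x_i + B) - B`.
-/

lemma relu_of_nonneg {x : ℝ} (h : 0 ≤ x) : relu x = x := max_eq_left h

lemma relu_of_nonpos {x : ℝ} (h : x ≤ 0) : relu x = 0 := max_eq_right h

lemma TwoLayerFFN.eval_apply {de w : ℕ} (f : TwoLayerFFN de w) (x : Fin de → ℝ) (i : Fin de) :
    f.eval x i = ∑ j, f.W2 i j * relu (f.W1 j ⬝ᵥ x + f.b1 j) + f.b2 i := rfl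

lemma matSup_le {m n : ℕ} {A : Matrix (Fin m) (Fin n) ℝ} {M : ℝ} (hM : 0 ≤ M)
    (h : ∀ i j, |A i j| ≤ M) : matSup A ≤ M :=
  Real.iSup_le (fun i => Real.iSup_le (h i) hM) hM

lemma abs_le_matSup {m n : ℕ} (A : Matrix (Fin m) (Fin n) ℝ) (i : Fin m) (j : Fin n) :
    |A i j| ≤ matSup A :=
  (le_ciSup (Finite.bddAbove_range fun j => |A i j|) j).trans
    (le_ciSup (Finite.bddAbove_range fun i => ⨆ j, |A i j|) i)

section Gate

variable {n : ℕ} (G : Fin n → Prop) [DecidablePred G] (v : Fin n → ℝ) (β B : ℝ)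

/-- With the score `u = v ⬝ᵥ x + β`, hidden unit `j < n` computes `σ(x_j + u - B)` if `G j`
and `σ(x_j + B)` otherwise, and the last hidden unit computes `σ(u - B)`. -/
def gateFFN : TwoLayerFFN n (n + 1) where
  W1 := Fin.snoc (α := fun _ => Fin n → ℝ) (fun j => Pi.single j 1 + if G j then v else 0) v
  b1 := Fin.snoc (α := fun _ => ℝ) (fun j => if G j then β - B else B) (β - B)
  W2 i := Fin.snoc (α := fun _ => ℝ) (Pi.single i 1) (if G i then -1 else 0)
  b2 i := if G i then 0 else -B

lemma gateFFN_eval_apply (x : Fin n → ℝ) (i : Fin n) :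
    (gateFFN G v β B).eval x i =
      relu (x i + if G i then v ⬝ᵥ x + β - B else B) -
        if G i then relu (v ⬝ᵥ x + β - B) else B := by
  simp only [TwoLayerFFN.eval_apply, gateFFN, Fin.sum_univ_castSucc, Fin.snoc_castSucc,
    Fin.snoc_last, Pi.single_apply, ite_mul, one_mul, zero_mul, Finset.sum_ite_eq',
    Finset.mem_univ, if_true, add_dotProduct, single_dotProduct]
  by_cases hi : G i <;>
    simp only [hi, ↓reduceIte, neg_mul, one_mul, add_zero, zero_dotProduct] <;> ring_nf

variable {G v β B} {x : Fin n → ℝ}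

lemma gateFFN_eval_of_two_mul_le (hx : ∀ i, |x i| ≤ B) (hu : 2 * B ≤ v ⬝ᵥ x + β) :
    (gateFFN G v β B).eval x = x := by
  ext i
  obtain ⟨hxl, hxu⟩ := abs_le.1 (hx i)
  rw [gateFFN_eval_apply]
  split_ifs
  · rw [relu_of_nonneg (by linarith), relu_of_nonneg (by linarith)]; ring
  · rw [relu_of_nonneg (by linarith)]; ring

lemma gateFFN_eval_of_nonpos (hx : ∀ i, |x i| ≤ B) (hu : v ⬝ᵥ x + β ≤ 0) :
    (gateFFN G v β B).eval x = fun i => if G i then 0 else x i := by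
  ext i
  obtain ⟨hxl, hxu⟩ := abs_le.1 (hx i)
  rw [gateFFN_eval_apply]
  split_ifs
  · rw [relu_of_nonpos (by linarith), relu_of_nonpos (by linarith)]; ring
  · rw [relu_of_nonneg (by linarith)]; ring

lemma gateFFN_wnorm_le {M : ℝ} (hM : 1 ≤ M) (hB : 0 ≤ B) (hv : ∀ k, 1 + |v k| ≤ M)
    (hβ : |β| + B ≤ M) : (gateFFN G v β B).wnorm ≤ M := by
  have hM0 : 0 ≤ M := zero_le_one.trans hM
  have hβB : |β - B| ≤ M := (abs_sub _ _).trans (by rwa [abs_of_nonneg hB])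
  have hBM : |B| ≤ M := by rw [abs_of_nonneg hB]; linarith [abs_nonneg β]
  refine sup_le (sup_le (sup_le (matSup_le hM0 fun j k => ?_) (Real.iSup_le (fun j => ?_) hM0))
    (matSup_le hM0 fun i j => ?_)) (Real.iSup_le (fun i => ?_) hM0)
  · induction j using Fin.lastCases with
    | last => simpa [gateFFN] using (le_add_of_nonneg_left zero_le_one).trans (hv k)
    | cast j =>
      simp only [gateFFN, Fin.snoc_castSucc, Pi.add_apply]
      refine (abs_add_le _ _).trans ((add_le_add ?_ ?_).trans (hv k))
      · rw [Pi.single_apply]; split_ifs <;> simp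
      · split_ifs <;> simp
  · induction j using Fin.lastCases with
    | last => simpa [gateFFN] using hβB
    | cast j => simp only [gateFFN, Fin.snoc_castSucc]; split_ifs <;> assumption
  · induction j using Fin.lastCases with
    | last => simp only [gateFFN, Fin.snoc_last]; split_ifs <;> simp [hM, hM0]
    | cast j =>
      simp only [gateFFN, Fin.snoc_castSucc, Pi.single_apply]; split_ifs <;> simp [hM, hM0]
  · simp only [gateFFN]; split_ifs
    · simpa using hM0
    · rwa [abs_neg]

end Gate

open Real in
lemma two_div_pi_mul_sub_le_cos_sub_sin_sub {x y : ℝ} (hx : 0 ≤ x) (hxy : x ≤ y) (hy : y ≤ π / 2) :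
    2 / π * (y - x) ≤ (cos x - sin x) - (cos y - sin y) := by
  obtain ⟨m, δ, rfl, rfl⟩ : ∃ m δ, x = m - δ ∧ y = m + δ :=
    ⟨(x + y) / 2, (y - x) / 2, by ring, by ring⟩
  have hsplit : (cos (m - δ) - sin (m - δ)) - (cos (m + δ) - sin (m + δ)) =
      2 * sin δ * (sin m + cos m) := by
    rw [cos_sub, sin_sub, cos_add, sin_add]; ring
  have hsinm : 0 ≤ sin m := sin_nonneg_of_nonneg_of_le_pi (by linarith) (by linarith [pi_pos])
  have hcosm : 0 ≤ cos m := cos_nonneg_of_mem_Icc ⟨by linarith [pi_pos], by linarith⟩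
  -- on `[0, π/2]`, `(sin m + cos m)² = 1 + 2 sin m cos m ≥ 1`
  have hm : 1 ≤ sin m + cos m := by nlinarith [sin_sq_add_cos_sq m]
  have hδ : 2 / π * δ ≤ sin δ := mul_le_sin (by linarith) (by linarith)
  have hδ0 : 0 ≤ 2 / π * δ := mul_nonneg (div_nonneg zero_le_two pi_pos.le) (by linarith)
  rw [hsplit]
  nlinarith [mul_nonneg hδ0 (sub_nonneg.2 hm)]

def phase (ℓ s : ℕ) : ℝ :=
  Real.cos (s * Real.pi / (2 * ℓ)) - Real.sin (s * Real.pi / (2 * ℓ))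

lemma abs_phase_le (ℓ s : ℕ) : |phase ℓ s| ≤ 2 := by
  have := Real.abs_cos_le_one (s * Real.pi / (2 * ℓ))
  have := Real.abs_sin_le_one (s * Real.pi / (2 * ℓ))
  exact (abs_sub _ _).trans (by linarith)

lemma sub_div_le_phase_sub_phase {ℓ s s' : ℕ} (hss' : s ≤ s') (hs' : s' ≤ ℓ) :
    ((s' : ℝ) - s) / ℓ ≤ phase ℓ s - phase ℓ s' := by
  rcases Nat.eq_zero_or_pos ℓ with rfl | hℓ
  · simp [phase]
  have hℓ' : (0 : ℝ) < ℓ := by exact_mod_cast hℓ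
  have hangle : ∀ r : ℕ, (r : ℝ) * Real.pi / (2 * ℓ) = Real.pi / 2 * (r / ℓ) := fun r => by
    field_simp
  have key := two_div_pi_mul_sub_le_cos_sub_sin_sub (x := s * Real.pi / (2 * ℓ))
    (y := s' * Real.pi / (2 * ℓ)) (by positivity) (by gcongr) (by
      rw [hangle]
      exact mul_le_of_le_one_right (by positivity)
        ((div_le_one hℓ').2 (by exact_mod_cast hs')))
  have hlhs : 2 / Real.pi * (s' * Real.pi / (2 * ℓ) - s * Real.pi / (2 * ℓ)) =
      ((s' : ℝ) - s) / ℓ := by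
    field_simp
  unfold phase
  linarith

lemma phase_le_phase {ℓ s s' : ℕ} (hss' : s ≤ s') (hs' : s' ≤ ℓ) : phase ℓ s' ≤ phase ℓ s := by
  have := sub_div_le_phase_sub_phase hss' hs'
  have : (0 : ℝ) ≤ ((s' : ℝ) - s) / ℓ :=
    div_nonneg (sub_nonneg.2 (by exact_mod_cast hss')) ℓ.cast_nonneg
  linarith

lemma phase_add_inv_le_phase {ℓ s s' : ℕ} (hss' : s < s') (hs' : s' ≤ ℓ) :
    phase ℓ s' + 1 / ℓ ≤ phase ℓ s := by
  have := sub_div_le_phase_sub_phase hss'.le hs'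
  have : (1 : ℝ) / ℓ ≤ ((s' : ℝ) - s) / ℓ := by
    gcongr
    rw [le_sub_iff_add_le']
    exact_mod_cast hss'
  linarith

section Embedding

variable {e ℓ : ℕ} {H : Matrix (Fin (e + 5)) (Fin ℓ) ℝ}

lemma IsEmbedG.one_le_matSup (hH : IsEmbedG e ℓ H) (t : Fin ℓ) : 1 ≤ matSup H := by
  simpa [hH.2.2 t] using abs_le_matSup H ⟨e + 4, by omega⟩ t

variable (e) in
def phaseReadout : Fin (e + 5) → ℝ := Pi.single ⟨e + 2, by omega⟩ 1 - Pi.single ⟨e + 3, by omega⟩ 1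

lemma abs_phaseReadout_le (i : Fin (e + 5)) : |phaseReadout e i| ≤ 1 := by
  simp only [phaseReadout, Pi.sub_apply, Pi.single_apply]
  split_ifs with h₂ h₃ <;> simp_all [Fin.ext_iff]

lemma IsEmbedG.phaseReadout_dotProduct (hH : IsEmbedG e ℓ H) (t : Fin ℓ) :
    phaseReadout e ⬝ᵥ (fun r => H r t) = phase ℓ (t + 1) := by
  simp only [phaseReadout, sub_dotProduct, single_dotProduct, one_mul, hH.1 t, hH.2.1 t, phase]
  push_cast
  ring_nf

variable (G : Fin (e + 5) → Prop) [DecidablePred G]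

variable (e) in
def phaseGate (α c B : ℝ) : TwoLayerFFN (e + 5) (e + 6) :=
  gateFFN G (α • phaseReadout e) (-(α * c)) B

lemma phaseGate_wnorm_le {α c B : ℝ} (hℓ : 1 ≤ ℓ) (hB : 1 ≤ B) (hα : |α| = 4 * ℓ * B)
    (hc : |c| ≤ 5 / 2) : (phaseGate e G α c B).wnorm ≤ 16 * ℓ * B := by
  have hℓB : 1 ≤ (ℓ : ℝ) * B := one_le_mul_of_one_le_of_one_le (by exact_mod_cast hℓ) hB
  refine gateFFN_wnorm_le (by linarith) (by linarith) (fun i => ?_) ?_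
  · rw [Pi.smul_apply, smul_eq_mul, abs_mul, hα]
    nlinarith [abs_phaseReadout_le (e := e) i, abs_nonneg (phaseReadout e i)]
  · rw [abs_neg, abs_mul, hα]
    have : B ≤ ℓ * B := le_mul_of_one_le_left (by linarith) (by exact_mod_cast hℓ)
    nlinarith [mul_le_mul_of_nonneg_left hc (by linarith : (0 : ℝ) ≤ ℓ * B)]

lemma IsEmbedG.phaseGate_score (hH : IsEmbedG e ℓ H) (α c : ℝ) (t : Fin ℓ) :
    (α • phaseReadout e) ⬝ᵥ (fun r => H r t) + -(α * c) = α * (phase ℓ (t + 1) - c) := by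
  rw [smul_dotProduct, hH.phaseReadout_dotProduct, smul_eq_mul]
  ring

lemma IsEmbedG.eval_phaseGate_of_two_mul_le (hH : IsEmbedG e ℓ H) {α c : ℝ} {t : Fin ℓ}
    (h : 2 * matSup H ≤ α * (phase ℓ (t + 1) - c)) :
    (phaseGate e G α c (matSup H)).eval (fun r => H r t) = fun i => H i t :=
  gateFFN_eval_of_two_mul_le (fun i => abs_le_matSup H i t) (hH.phaseGate_score α c t ▸ h)

lemma IsEmbedG.eval_phaseGate_of_nonpos (hH : IsEmbedG e ℓ H) {α c : ℝ} {t : Fin ℓ}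
    (h : α * (phase ℓ (t + 1) - c) ≤ 0) :
    (phaseGate e G α c (matSup H)).eval (fun r => H r t) = fun i => if G i then 0 else H i t :=
  gateFFN_eval_of_nonpos (fun i => abs_le_matSup H i t) (hH.phaseGate_score α c t ▸ h)

lemma IsEmbedG.eval_prefixGate (hH : IsEmbedG e ℓ H) {k : ℕ} (hk : k ≤ ℓ) (t : Fin ℓ) :
    (phaseGate e G (4 * ℓ * matSup H) (phase ℓ k - 1 / (2 * ℓ)) (matSup H)).eval
        (fun r => H r t) = fun i => if (t : ℕ) < k then H i t else if G i then 0 else H i t := by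
  have hℓ : (0 : ℝ) < ℓ := by exact_mod_cast t.pos
  have hB := hH.one_le_matSup t
  have hinv : 1 / (2 * ℓ) ≤ (1 : ℝ) / ℓ := by gcongr; linarith
  by_cases ht : (t : ℕ) < k
  · simp only [ht, if_true]
    refine hH.eval_phaseGate_of_two_mul_le G ?_
    have := phase_le_phase (Nat.succ_le_of_lt ht) hk
    calc 2 * matSup H = 4 * ℓ * matSup H * (1 / (2 * ℓ)) := by field_simp; ring
      _ ≤ _ := by gcongr; linarith
  · simp only [ht, if_false]
    refine hH.eval_phaseGate_of_nonpos G (mul_nonpos_of_nonneg_of_nonpos (by positivity) ?_)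
    have := phase_add_inv_le_phase (by omega : k < t + 1) t.isLt
    linarith

lemma IsEmbedG.eval_suffixGate (hH : IsEmbedG e ℓ H) {k : ℕ} (hk : k ≤ ℓ) (t : Fin ℓ) :
    (phaseGate e G (-(4 * ℓ * matSup H)) (phase ℓ k + 1 / (2 * ℓ)) (matSup H)).eval
        (fun r => H r t) =
      fun i => if k ≤ (t : ℕ) + 1 then H i t else if G i then 0 else H i t := by
  have hℓ : (0 : ℝ) < ℓ := by exact_mod_cast t.pos
  have hB := hH.one_le_matSup t
  have hinv : 1 / (2 * ℓ) ≤ (1 : ℝ) / ℓ := by gcongr; linarith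
  by_cases ht : k ≤ (t : ℕ) + 1
  · simp only [ht, if_true]
    refine hH.eval_phaseGate_of_two_mul_le G ?_
    have := phase_le_phase ht t.isLt
    calc 2 * matSup H = 4 * ℓ * matSup H * (1 / (2 * ℓ)) := by field_simp; ring
      _ ≤ 4 * ℓ * matSup H * (phase ℓ k + 1 / (2 * ℓ) - phase ℓ (t + 1)) := by
        gcongr; linarith
      _ = _ := by ring
  · simp only [ht, if_false]
    refine hH.eval_phaseGate_of_nonpos G
      (mul_nonpos_of_nonpos_of_nonneg (neg_nonpos.2 (by positivity)) ?_)
    have := phase_add_inv_le_phase (by omega : (t : ℕ) + 1 < k) hk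
    linarith

end Embedding

/-- Coordinates `r₁,…,r₂` are 1-indexed, tokens `t : Fin ℓ` are 0-indexed, and
`d_embed = e + 5`. -/
theorem gating_lemma :
    ∃ C : ℝ, 0 < C ∧
      ∀ (e ℓ : ℕ) (H : Matrix (Fin (e + 5)) (Fin ℓ) ℝ), IsEmbedG e ℓ H →
      ∀ r₁ r₂ k₁ k₂ : ℕ, 1 ≤ r₁ → r₁ ≤ r₂ → r₂ ≤ e + 2 →
        1 ≤ k₁ → k₁ ≤ ℓ → 1 ≤ k₂ → k₂ ≤ ℓ →
      ∃ (w : ℕ) (f₁ f₂ : TwoLayerFFN (e + 5) w),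
        f₁.wnorm ≤ C * (ℓ : ℝ) * matSup H ∧
        f₂.wnorm ≤ C * (ℓ : ℝ) * matSup H ∧
        (∀ t : Fin ℓ,
          f₁.eval (fun r => H r t) = fun i =>
            if (t : ℕ) < k₁ then H i t
            else if r₁ ≤ (i : ℕ) + 1 ∧ (i : ℕ) + 1 ≤ r₂ then 0 else H i t) ∧
        (∀ t : Fin ℓ,
          f₂.eval (fun r => H r t) = fun i =>
            if k₂ ≤ (t : ℕ) + 1 then H i t
            else if r₁ ≤ (i : ℕ) + 1 ∧ (i : ℕ) + 1 ≤ r₂ then 0 else H i t) := by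
  refine ⟨16, by norm_num, fun e ℓ H hH r₁ r₂ k₁ k₂ _ _ _ hk₁ hk₁ℓ _ hk₂ℓ => ?_⟩
  have hℓ : 1 ≤ ℓ := hk₁.trans hk₁ℓ
  have hB : 1 ≤ matSup H := hH.one_le_matSup ⟨0, hℓ⟩
  have hα : |4 * ℓ * matSup H| = 4 * ℓ * matSup H := abs_of_nonneg (by positivity)
  have hinv : |1 / (2 * (ℓ : ℝ))| ≤ 1 / 2 := by
    rw [abs_of_nonneg (by positivity)]
    gcongr
    linarith [(Nat.one_le_cast (α := ℝ)).2 hℓ]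
  let G : Fin (e + 5) → Prop := fun i => r₁ ≤ (i : ℕ) + 1 ∧ (i : ℕ) + 1 ≤ r₂
  refine ⟨e + 6, phaseGate e G (4 * ℓ * matSup H) (phase ℓ k₁ - 1 / (2 * ℓ)) (matSup H),
    phaseGate e G (-(4 * ℓ * matSup H)) (phase ℓ k₂ + 1 / (2 * ℓ)) (matSup H),
    phaseGate_wnorm_le G hℓ hB hα ((abs_sub _ _).trans (by linarith [abs_phase_le ℓ k₁])),
    phaseGate_wnorm_le G hℓ hB (by rwa [abs_neg])
      ((abs_add_le _ _).trans (by linarith [abs_phase_le ℓ k₂])),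
    hH.eval_prefixGate G hk₁ℓ, hH.eval_suffixGate G hk₂ℓ⟩

end
end Paper
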